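/- arXiv:2401.13530 — 2 statements merged into one kernel-verified Lean document; each statement's English description precedes it below -/
import Mathlib

section
/- Let f : ℝ^d → ℝ be differentiable with a global minimizer x*. If f satisfies the Polyak–Łojasiewicz inequality 2γ(f(x) - f(x*)) ≤ ‖∇f(x)‖² for all x and some γ > 0, then along any gradient flow trajectory x'(t) = -∇f(x(t)) one has f(x(t)) - f(x*) ≤ e^{-2γt}(f(x(0)) - f(x*)) for all t ≥ 0. -/
/-!
Along the gradient flow, `t ↦ f (x t)` has derivative `-‖∇f (x t)‖²`, which the PL inequality
bounds by `-2γ (f (x t) - f xstar)`. The gap `u = f ∘ x - f xstar` therefore satisfies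
`u' ≤ -2γ u`, so `u t * exp (2γ t)` is nonincreasing, which is the claimed exponential decay.
-/

open Real Set

section GradientFlow

variable {F : Type*} [NormedAddCommGroup F] [InnerProductSpace ℝ F] [CompleteSpace F]

theorem HasGradientAt.hasDerivAt_comp {f : F → ℝ} {g x' : F} {x : ℝ → F} {t : ℝ}
    (hf : HasGradientAt f g (x t)) (hx : HasDerivAt x x' t) :
    HasDerivAt (fun s => f (x s)) (inner ℝ g x') t := by
  exact (hf.hasFDerivAt.comp_hasDerivAt t hx).congr_deriv (by simp)

theorem hasDerivAt_comp_of_gradient_flow {f : F → ℝ} {x : ℝ → F} {t : ℝ}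
    (hf : DifferentiableAt ℝ f (x t)) (hx : HasDerivAt x (-gradient f (x t)) t) :
    HasDerivAt (fun s => f (x s)) (-‖gradient f (x t)‖ ^ 2) t := by
  simpa [inner_neg_right, real_inner_self_eq_norm_sq] using hf.hasGradientAt.hasDerivAt_comp hx

end GradientFlow

section ExponentialDecay

variable {u u' : ℝ → ℝ} {k : ℝ}

theorem antitoneOn_mul_exp_of_hasDerivAt_le
    (hu : ∀ t, 0 ≤ t → HasDerivAt u (u' t) t) (hbound : ∀ t, 0 ≤ t → u' t ≤ -k * u t) :
    AntitoneOn (fun t => u t * exp (k * t)) (Ici 0) := by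
  have hderiv : ∀ t, 0 ≤ t →
      HasDerivAt (fun t => u t * exp (k * t)) (exp (k * t) * (u' t + k * u t)) t := by
    intro t ht
    have hexp : HasDerivAt (fun t => exp (k * t)) (exp (k * t) * k) t := by
      simpa using ((hasDerivAt_id t).const_mul k).exp
    exact ((hu t ht).mul hexp).congr_deriv (by ring)
  refine antitoneOn_of_deriv_nonpos (convex_Ici 0)
    (fun t ht => (hderiv t ht).continuousAt.continuousWithinAt) ?_ ?_ <;>
    rw [interior_Ici]
  · exact fun t ht => (hderiv t ht.le).differentiableAt.differentiableWithinAt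
  · intro t ht
    rw [(hderiv t ht.le).deriv]
    exact mul_nonpos_of_nonneg_of_nonpos (exp_pos _).le (by linarith [hbound t ht.le])

theorem le_exp_neg_mul_of_hasDerivAt_le
    (hu : ∀ t, 0 ≤ t → HasDerivAt u (u' t) t) (hbound : ∀ t, 0 ≤ t → u' t ≤ -k * u t)
    {t : ℝ} (ht : 0 ≤ t) : u t ≤ exp (-k * t) * u 0 := by
  have hmono := antitoneOn_mul_exp_of_hasDerivAt_le hu hbound self_mem_Ici ht ht
  simp only [mul_zero, exp_zero, mul_one] at hmono
  rwa [neg_mul, exp_neg, inv_mul_eq_div, le_div_iff₀ (exp_pos _)]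

end ExponentialDecay

theorem stmt_1_general {d : ℕ} (f : EuclideanSpace ℝ (Fin d) → ℝ) (hf : Differentiable ℝ f)
    (xstar : EuclideanSpace ℝ (Fin d))
    (γ : ℝ)
    (hPL : ∀ x, 2 * γ * (f x - f xstar) ≤ ‖gradient f x‖ ^ 2)
    (x : ℝ → EuclideanSpace ℝ (Fin d))
    (hx : ∀ t, 0 ≤ t → HasDerivAt x (-(gradient f (x t))) t) :
    ∀ t, 0 ≤ t → f (x t) - f xstar ≤ Real.exp (-2 * γ * t) * (f (x 0) - f xstar) := by
  intro t ht
  have hgap : ∀ s, 0 ≤ s →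
      HasDerivAt (fun s => f (x s) - f xstar) (-‖gradient f (x s)‖ ^ 2) s := fun s hs =>
    (hasDerivAt_comp_of_gradient_flow (hf (x s)) (hx s hs)).sub_const (f xstar)
  have hdecay : ∀ s, 0 ≤ s → -‖gradient f (x s)‖ ^ 2 ≤ -(2 * γ) * (f (x s) - f xstar) :=
    fun s _ => by linarith [hPL (x s)]
  simpa only [neg_mul] using le_exp_neg_mul_of_hasDerivAt_le hgap hdecay ht

/-- If a differentiable `f` with global minimizer `xstar` satisfies the PL inequality
`2γ(f x - f xstar) ≤ ‖∇f x‖²`, then along any gradient-flow trajectory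
`x'(t) = -∇f(x t)` one has `f (x t) - f xstar ≤ e^{-2γt} (f (x 0) - f xstar)` for `t ≥ 0`. -/
theorem stmt_1 {d : ℕ} (f : EuclideanSpace ℝ (Fin d) → ℝ) (hf : Differentiable ℝ f)
    (xstar : EuclideanSpace ℝ (Fin d)) (hmin : ∀ y, f xstar ≤ f y)
    (γ : ℝ) (hγ : 0 < γ)
    (hPL : ∀ x, 2 * γ * (f x - f xstar) ≤ ‖gradient f x‖ ^ 2)
    (x : ℝ → EuclideanSpace ℝ (Fin d))
    (hx : ∀ t, 0 ≤ t → HasDerivAt x (-(gradient f (x t))) t) :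
    ∀ t, 0 ≤ t → f (x t) - f xstar ≤ Real.exp (-2 * γ * t) * (f (x 0) - f xstar) :=
  stmt_1_general f hf xstar γ hPL x hx
end

section
/- (von Neumann trace inequality for symmetric matrices) For real symmetric n×n matrices A and B with eigenvalues λ₁(A) ≥ ... ≥ λₙ(A) and λ₁(B) ≥ ... ≥ λₙ(B) listed in descending order, tr(AB) ≤ Σᵢ λᵢ(A)λᵢ(B). -/
open Finset Matrix

lemma permMatrix_apply' {n : ℕ} (σ : Equiv.Perm (Fin n)) (i j : Fin n) :
    (σ.permMatrix ℝ) i j = if σ i = j then 1 else 0 := by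
  simp [Equiv.Perm.permMatrix, PEquiv.toMatrix_apply, Equiv.toPEquiv_apply, Option.mem_def,
    eq_comm]

/-- von Neumann trace inequality for real symmetric matrices: if `A = U diag(a) Uᵀ` and
`B = V diag(b) Vᵀ` with `U, V` orthogonal and `a, b` the eigenvalues listed in descending
order, then `tr (A * B) ≤ ∑ i, a i * b i`. -/
theorem stmt_4 {n : ℕ} (A B : Matrix (Fin n) (Fin n) ℝ)
    (hA : A.IsSymm) (hB : B.IsSymm)
    (a b : Fin n → ℝ) (ha : Antitone a) (hb : Antitone b)
    (U V : Matrix (Fin n) (Fin n) ℝ)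
    (hU : U * U.transpose = 1) (hU' : U.transpose * U = 1)
    (hV : V * V.transpose = 1) (hV' : V.transpose * V = 1)
    (hAdiag : A = U * Matrix.diagonal a * U.transpose)
    (hBdiag : B = V * Matrix.diagonal b * V.transpose) :
    (A * B).trace ≤ ∑ i, a i * b i := by
  set W : Matrix (Fin n) (Fin n) ℝ := U.transpose * V with hW
  have hWW : W * W.transpose = 1 := by
    rw [hW, transpose_mul, transpose_transpose, mul_assoc, ← mul_assoc V, hV, one_mul, hU']
  have hWW' : W.transpose * W = 1 := by
    rw [hW, transpose_mul, transpose_transpose, mul_assoc, ← mul_assoc U, hU, one_mul, hV']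
  -- S is doubly stochastic
  set S : Matrix (Fin n) (Fin n) ℝ := Matrix.of fun i j => (W i j) ^ 2 with hS
  have hSrow : ∀ i, ∑ j, S i j = 1 := by
    intro i
    have := congrArg (fun M : Matrix (Fin n) (Fin n) ℝ => M i i) hWW
    simpa [Matrix.mul_apply, hS, sq] using this
  have hScol : ∀ j, ∑ i, S i j = 1 := by
    intro j
    have := congrArg (fun M : Matrix (Fin n) (Fin n) ℝ => M j j) hWW'
    simpa [Matrix.mul_apply, hS, sq] using this
  have hSmem : S ∈ doublyStochastic ℝ (Fin n) := by
    rw [mem_doublyStochastic_iff_sum]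
    exact ⟨fun i j => sq_nonneg _, hSrow, hScol⟩
  -- trace computation
  have h1 : (A * B).trace
      = (Matrix.diagonal a * W * Matrix.diagonal b * W.transpose).trace := by
    rw [hAdiag, hBdiag]
    rw [show U * Matrix.diagonal a * U.transpose * (V * Matrix.diagonal b * V.transpose)
        = U * (Matrix.diagonal a * (U.transpose * (V * (Matrix.diagonal b * V.transpose))))
      from by simp only [Matrix.mul_assoc]]
    rw [Matrix.trace_mul_comm]
    congr 1
    rw [hW, transpose_mul, transpose_transpose]
    simp only [Matrix.mul_assoc]
  have htr : (A * B).trace = ∑ i, ∑ j, a i * b j * S i j := by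
    have hX : Matrix.diagonal a * W * Matrix.diagonal b
        = Matrix.of fun i j => a i * W i j * b j := by
      ext i j
      rw [Matrix.mul_diagonal, Matrix.diagonal_mul, Matrix.of_apply]
    rw [h1, hX, Matrix.trace]
    simp only [Matrix.diag_apply, Matrix.mul_apply, Matrix.transpose_apply, hS, Matrix.of_apply]
    exact Finset.sum_congr rfl fun i _ => Finset.sum_congr rfl fun j _ => by ring
  rw [htr]
  -- Birkhoff
  obtain ⟨w, hw0, hw1, hwS⟩ := exists_eq_sum_perm_of_mem_doublyStochastic hSmem
  have hmono : Monovary a b := by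
    intro i j hij
    exact ha (le_of_lt (lt_of_not_ge fun hle => absurd hij (not_lt.2 (hb hle))))
  have key : ∀ i, ∑ j, a i * b j * S i j
      = ∑ σ : Equiv.Perm (Fin n), w σ * (a i * b (σ i)) := by
    intro i
    rw [← hwS]
    simp only [Finset.sum_apply, Matrix.sum_apply, Matrix.smul_apply, smul_eq_mul,
      permMatrix_apply', mul_ite, mul_one, mul_zero, Finset.mul_sum]
    rw [Finset.sum_comm]
    refine Finset.sum_congr rfl fun σ _ => ?_
    rw [Finset.sum_ite_eq (Finset.univ) (σ i) (fun j => a i * b j * w σ)]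
    simp [mul_comm]
  calc ∑ i, ∑ j, a i * b j * S i j
      = ∑ σ : Equiv.Perm (Fin n), w σ * ∑ i, a i * b (σ i) := by
        simp only [key, Finset.mul_sum]
        exact Finset.sum_comm
    _ ≤ ∑ σ : Equiv.Perm (Fin n), w σ * ∑ i, a i * b i := by
        refine Finset.sum_le_sum fun σ _ => ?_
        exact mul_le_mul_of_nonneg_left (hmono.sum_mul_comp_perm_le_sum_mul) (hw0 σ)
    _ = ∑ i, a i * b i := by rw [← Finset.sum_mul, hw1, one_mul]
end
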